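/- Let β ∈ [1/2, 1], σ > 1, λ ≥ 0, and p(μ,η) = −μ² + η² − 2iσ(βμ − η) − (1−β²)σ² + λ, with p̃ as the ℓ²-norm of p together with all its partial derivatives in (μ,η). If λ ≥ 2(|μ| + σ)², then p̃(μ,η) ≥ λ/2 ≥ c√λ for some constant c > 0 independent of λ, σ, μ, η; and if λ < 2(|μ| + σ)², then p̃(μ,η) ≥ √λ/√2. In particular √λ / p̃(μ,η) is bounded uniformly in (μ,η,σ,λ). -/

import Mathlib

open Complex

/-- The symbol of the conjugated operator. -/
noncomputable def symbP (β σ lam : ℝ) (μ η : ℝ) : ℂ :=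
  -(μ:ℂ)^2 + (η:ℂ)^2 - 2 * Complex.I * σ * ((β:ℂ) * μ - η) - (1 - (β:ℂ)^2) * σ^2 + lam

/-- The weight `p̃`, the ℓ²-norm of `p` and its partial derivatives up to order two. -/
noncomputable def symbPTilde (β σ lam : ℝ) (μ η : ℝ) : ℝ :=
  Real.sqrt (‖symbP β σ lam μ η‖^2
    + ‖deriv (fun μ' => symbP β σ lam μ' η) μ‖^2
    + ‖deriv (fun η' => symbP β σ lam μ η') η‖^2
    + ‖deriv (deriv (fun μ' => symbP β σ lam μ' η)) μ‖^2
    + ‖deriv (deriv (fun η' => symbP β σ lam μ η')) η‖^2)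

/-!
Where `λ ≥ 2(|μ| + σ)²`, the constant `λ` dominates the real part of `p`, so
`p̃ ≥ |Re p| ≥ λ - (|μ| + σ)² ≥ λ/2`, and `λ ≥ 2σ² > 2` gives `λ/2 ≥ √λ/√2`.
Elsewhere the first derivatives alone suffice: `‖∂_μ p‖² + ‖∂_η p‖² ≥ 4μ² + 4σ² ≥ 2(|μ| + σ)² > λ`.
Either way `√λ ≤ √2 p̃`.
-/

lemma hasDerivAt_ofReal_affine (a b : ℂ) (x : ℝ) :
    HasDerivAt (fun y : ℝ => a * y + b) a x := by
  simpa using (((hasDerivAt_id (x : ℂ)).const_mul a).add_const b).comp_ofReal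

lemma sqrt_div_sqrt_two_le_half {x : ℝ} (hx : 2 ≤ x) : Real.sqrt x / Real.sqrt 2 ≤ x / 2 := by
  rw [← Real.sqrt_div' _ zero_le_two, Real.sqrt_le_left (by linarith)]
  nlinarith

section Derivatives

variable (β σ lam μ η : ℝ)

lemma hasDerivAt_symbP_fst :
    HasDerivAt (fun μ' => symbP β σ lam μ' η) (-2 * μ - 2 * I * σ * β) μ := by
  have h := (((((hasDerivAt_pow 2 (μ : ℂ)).neg.add_const ((η : ℂ) ^ 2)).sub
    ((((hasDerivAt_id (μ : ℂ)).const_mul (β : ℂ)).sub_const (η : ℂ)).const_mul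
      (2 * I * σ))).sub_const ((1 - (β : ℂ) ^ 2) * σ ^ 2)).add_const (lam : ℂ)).comp_ofReal
  exact h.congr_deriv (by simp)

lemma hasDerivAt_symbP_snd :
    HasDerivAt (fun η' => symbP β σ lam μ η') (2 * η + 2 * I * σ) η := by
  have h := (((((hasDerivAt_pow 2 (η : ℂ)).const_add (-(μ : ℂ) ^ 2)).sub
    (((hasDerivAt_id (η : ℂ)).const_sub ((β : ℂ) * μ)).const_mul (2 * I * σ))).sub_const
      ((1 - (β : ℂ) ^ 2) * σ ^ 2)).add_const (lam : ℂ)).comp_ofReal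
  exact h.congr_deriv (by simp)

lemma deriv_deriv_symbP_fst :
    deriv (deriv (fun μ' => symbP β σ lam μ' η)) μ = -2 := by
  have h : deriv (fun μ' => symbP β σ lam μ' η) = fun μ' : ℝ => -2 * μ' + -2 * I * σ * β := by
    ext μ'
    rw [(hasDerivAt_symbP_fst β σ lam μ' η).deriv]
    ring
  rw [h, (hasDerivAt_ofReal_affine _ _ μ).deriv]

lemma deriv_deriv_symbP_snd :
    deriv (deriv (fun η' => symbP β σ lam μ η')) η = 2 := by
  have h : deriv (fun η' => symbP β σ lam μ η') = fun η' : ℝ => 2 * η' + 2 * I * σ := by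
    ext η'
    rw [(hasDerivAt_symbP_snd β σ lam μ η').deriv]
  rw [h, (hasDerivAt_ofReal_affine _ _ η).deriv]

lemma symbPTilde_eq :
    symbPTilde β σ lam μ η = Real.sqrt (‖symbP β σ lam μ η‖ ^ 2
      + (4 * μ ^ 2 + 4 * σ ^ 2 * β ^ 2) + (4 * η ^ 2 + 4 * σ ^ 2) + 8) := by
  have hμ : ‖(-2 * μ - 2 * I * σ * β : ℂ)‖ ^ 2 = 4 * μ ^ 2 + 4 * σ ^ 2 * β ^ 2 := by
    rw [Complex.sq_norm, Complex.normSq_apply]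
    simp
    ring
  have hη : ‖(2 * η + 2 * I * σ : ℂ)‖ ^ 2 = 4 * η ^ 2 + 4 * σ ^ 2 := by
    rw [Complex.sq_norm, Complex.normSq_apply]
    simp
    ring
  rw [symbPTilde, deriv_deriv_symbP_fst, deriv_deriv_symbP_snd,
    (hasDerivAt_symbP_fst β σ lam μ η).deriv, (hasDerivAt_symbP_snd β σ lam μ η).deriv, hμ, hη]
  norm_num [add_assoc]

end Derivatives

section Bounds

variable {β σ lam μ η : ℝ}

lemma re_symbP : (symbP β σ lam μ η).re = -μ ^ 2 + η ^ 2 - (1 - β ^ 2) * σ ^ 2 + lam := by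
  simp [symbP, ← Complex.ofReal_pow]

lemma norm_symbP_le_symbPTilde : ‖symbP β σ lam μ η‖ ≤ symbPTilde β σ lam μ η := by
  rw [symbPTilde_eq]
  exact Real.le_sqrt_of_sq_le (by nlinarith [sq_nonneg μ, sq_nonneg η, sq_nonneg (σ * β)])

lemma abs_add_le_symbPTilde : |μ| + σ ≤ symbPTilde β σ lam μ η := by
  rw [symbPTilde_eq]
  refine Real.le_sqrt_of_sq_le ?_
  nlinarith [sq_abs μ, sq_nonneg (|μ| - σ), sq_nonneg ‖symbP β σ lam μ η‖, sq_nonneg η,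
    sq_nonneg (σ * β)]

lemma half_le_symbPTilde (hσ : 0 ≤ σ) (h : 2 * (|μ| + σ) ^ 2 ≤ lam) :
    lam / 2 ≤ symbPTilde β σ lam μ η := by
  have hre : lam / 2 ≤ (symbP β σ lam μ η).re := by
    rw [re_symbP]
    nlinarith [sq_abs μ, abs_nonneg μ, sq_nonneg η, sq_nonneg (σ * β)]
  exact hre.trans ((re_le_norm _).trans norm_symbP_le_symbPTilde)

lemma sqrt_div_sqrt_two_le_symbPTilde (hσ : 0 ≤ σ) (h : lam < 2 * (|μ| + σ) ^ 2) :
    Real.sqrt lam / Real.sqrt 2 ≤ symbPTilde β σ lam μ η := by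
  refine le_trans ?_ abs_add_le_symbPTilde
  rw [← Real.sqrt_div' _ zero_le_two, Real.sqrt_le_left (add_nonneg (abs_nonneg μ) hσ)]
  linarith

end Bounds

theorem symbol_weight_case_bounds :
    ∃ c > (0:ℝ), ∃ C > (0:ℝ), ∀ β σ lam μ η : ℝ,
      β ∈ Set.Icc (1/2 : ℝ) 1 → 1 < σ → 0 ≤ lam →
      ((2 * (|μ| + σ)^2 ≤ lam →
          lam / 2 ≤ symbPTilde β σ lam μ η ∧ c * Real.sqrt lam ≤ lam / 2)
        ∧ (lam < 2 * (|μ| + σ)^2 →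
          Real.sqrt lam / Real.sqrt 2 ≤ symbPTilde β σ lam μ η)
        ∧ Real.sqrt lam ≤ C * symbPTilde β σ lam μ η) := by
  refine ⟨1 / Real.sqrt 2, by positivity, Real.sqrt 2, by positivity, ?_⟩
  intro β σ lam μ η _ hσ _
  have hσ0 : 0 ≤ σ := by linarith
  have hsqrt_le_half (h : 2 * (|μ| + σ) ^ 2 ≤ lam) : Real.sqrt lam / Real.sqrt 2 ≤ lam / 2 :=
    sqrt_div_sqrt_two_le_half (by nlinarith [abs_nonneg μ])
  have hweight : Real.sqrt lam / Real.sqrt 2 ≤ symbPTilde β σ lam μ η := by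
    rcases le_or_gt (2 * (|μ| + σ) ^ 2) lam with h | h
    · exact (hsqrt_le_half h).trans (half_le_symbPTilde hσ0 h)
    · exact sqrt_div_sqrt_two_le_symbPTilde hσ0 h
  refine ⟨fun h => ⟨half_le_symbPTilde hσ0 h, ?_⟩, sqrt_div_sqrt_two_le_symbPTilde hσ0, ?_⟩
  · rw [one_div_mul_eq_div]
    exact hsqrt_le_half h
  · exact (div_le_iff₀' (by positivity)).mp hweight
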